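/- Let 𝔙 be a regular vessel with d = 2 and generalized NLS parameters σ1 = I, σ2 = diag(a,−a) with a ≠ 0, γ = [[γ11, γ12],[γ21, −γ11]], and write H_0(x,t) = [[h11, h12],[h21, h22]]. Then the linkage condition gives γ_*(x,t) = [[γ11, γ12 + 2a·h12],[γ21 − 2a·h21, −γ11]], and the diagonal entries of the moment recurrence for n = 0 give on Ω: ∂_x h11 − ∂_x h22 = 2(2a·h12·h21 − γ21·h12 + γ12·h21). -/

import Mathlib

noncomputable section

open ContinuousLinearMap

/-- The coefficient space `ℂ^d`. -/
abbrev Ed (d : ℕ) : Type := EuclideanSpace ℂ (Fin d)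

/-- A `d × d` complex matrix viewed as a continuous linear map on `ℂ^d`. -/
def m2c {d : ℕ} (σ : Matrix (Fin d) (Fin d) ℂ) : Ed d →L[ℂ] Ed d :=
  Matrix.toEuclideanCLM (𝕜 := ℂ) σ

/-- A continuous linear map on `ℂ^d` viewed as a `d × d` complex matrix. -/
def c2m {d : ℕ} (T : Ed d →L[ℂ] Ed d) : Matrix (Fin d) (Fin d) ℂ :=
  (Matrix.toEuclideanCLM (𝕜 := ℂ)).symm T

/-- Partial derivative in the first (space) variable. -/
def pdx {M : Type*} [NormedAddCommGroup M] [NormedSpace ℝ M]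
    (F : ℝ × ℝ → M) (p : ℝ × ℝ) : M :=
  deriv (fun x => F (x, p.2)) p.1

/-- Partial derivative in the second (time) variable. -/
def pdt {M : Type*} [NormedAddCommGroup M] [NormedSpace ℝ M]
    (F : ℝ × ℝ → M) (p : ℝ × ℝ) : M :=
  deriv (fun t => F (p.1, t)) p.2

/-- Entrywise partial derivative in `x` of a matrix-valued function. -/
def pdxM {d : ℕ} (F : ℝ × ℝ → Matrix (Fin d) (Fin d) ℂ) (p : ℝ × ℝ) :
    Matrix (Fin d) (Fin d) ℂ :=
  Matrix.of fun i j => pdx (fun q => F q i j) p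

/-- Entrywise partial derivative in `t` of a matrix-valued function. -/
def pdtM {d : ℕ} (F : ℝ × ℝ → Matrix (Fin d) (Fin d) ℂ) (p : ℝ × ℝ) :
    Matrix (Fin d) (Fin d) ℂ :=
  Matrix.of fun i j => pdt (fun q => F q i j) p

/-- A regular vessel with inner (Krein/Hilbert) space `K` and coefficient space `ℂ^d`. -/
structure Vessel (K : Type*) [NormedAddCommGroup K] [InnerProductSpace ℂ K]
    [CompleteSpace K] (d : ℕ) where
  Ω : Set (ℝ × ℝ)
  hΩ : IsOpen Ω
  A : K →L[ℂ] K
  Aζ : K →L[ℂ] K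
  B : ℝ × ℝ → Ed d →L[ℂ] K
  C : ℝ × ℝ → K →L[ℂ] Ed d
  X : ℝ × ℝ → K →L[ℂ] K
  /-- pointwise inverse of `X` -/
  Xi : ℝ × ℝ → K →L[ℂ] K
  σ1 : Matrix (Fin d) (Fin d) ℂ
  σ2 : Matrix (Fin d) (Fin d) ℂ
  γ : Matrix (Fin d) (Fin d) ℂ
  γs : ℝ × ℝ → Matrix (Fin d) (Fin d) ℂ
  hσ1 : IsUnit σ1
  smoothB : ContDiffOn ℝ 2 B Ω
  smoothC : ContDiffOn ℝ 2 C Ω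
  smoothX : ContDiffOn ℝ 2 X Ω
  hXinv : ∀ p ∈ Ω, X p ∘L Xi p = (1 : K →L[ℂ] K) ∧ Xi p ∘L X p = (1 : K →L[ℂ] K)
  eqBx : ∀ p ∈ Ω,
    pdx B p ∘L m2c σ1 + A ∘L B p ∘L m2c σ2 + B p ∘L m2c γ = 0
  eqBt : ∀ p ∈ Ω, pdt B p = Complex.I • (A ∘L pdx B p)
  eqCx : ∀ p ∈ Ω,
    m2c σ1 ∘L pdx C p + m2c σ2 ∘L C p ∘L Aζ - m2c γ ∘L C p = 0
  eqCt : ∀ p ∈ Ω, pdt C p = (-Complex.I) • (pdx C p ∘L Aζ)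
  eqXx : ∀ p ∈ Ω, pdx X p = B p ∘L m2c σ2 ∘L C p
  eqXt : ∀ p ∈ Ω, pdt X p =
    Complex.I • (A ∘L B p ∘L m2c σ2 ∘L C p) -
      Complex.I • (B p ∘L m2c σ2 ∘L C p ∘L Aζ) +
      Complex.I • (B p ∘L m2c γ ∘L C p)
  eqLyap : ∀ p ∈ Ω, A ∘L X p + X p ∘L Aζ + B p ∘L m2c σ1 ∘L C p = 0
  eqLink : ∀ p ∈ Ω, γs p =
    γ + σ2 * c2m (C p ∘L Xi p ∘L B p) * σ1 - σ1 * c2m (C p ∘L Xi p ∘L B p) * σ2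

/-- The `n`-th moment `H_n = C 𝕏⁻¹ Aⁿ B` of a vessel, as a `d × d` matrix. -/
def Vessel.H {K : Type*} [NormedAddCommGroup K] [InnerProductSpace ℂ K]
    [CompleteSpace K] {d : ℕ} (V : Vessel K d) (n : ℕ) (p : ℝ × ℝ) :
    Matrix (Fin d) (Fin d) ℂ :=
  c2m (V.C p ∘L V.Xi p ∘L (V.A ^ n) ∘L V.B p)

/-!
The diagonal relation is the `(0,0)` minus `(1,1)` entry of the `n = 0` moment recurrence
`σ₁ (∂ₓH₀) σ₁ = γH₀σ₁ - σ₁H₀γ + σ₂H₁σ₁ - σ₁H₁σ₂ + σ₂H₀σ₁H₀σ₁ - σ₁H₀σ₂H₀σ₁`,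
in which the `H₁` terms drop out because `σ₂` is diagonal. The recurrence itself comes from
differentiating `H₀ = C 𝕏⁻¹ B` by the product rule, replacing `σ₁ ∂ₓC`, `∂ₓB σ₁` and `∂ₓ𝕏` by the
vessel equations, and eliminating `A_ζ 𝕏⁻¹` with the Lyapunov equation.
-/

section Calculus

variable {𝕜 𝕜' : Type*} [NontriviallyNormedField 𝕜] [NontriviallyNormedField 𝕜']
  [NormedAlgebra 𝕜 𝕜']

theorem HasDerivAt.clm_comp_of_isScalarTower
    {E F G : Type*} [NormedAddCommGroup E] [NormedSpace 𝕜 E] [NormedSpace 𝕜' E]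
    [IsScalarTower 𝕜 𝕜' E] [NormedAddCommGroup F] [NormedSpace 𝕜 F] [NormedSpace 𝕜' F]
    [IsScalarTower 𝕜 𝕜' F] [NormedAddCommGroup G] [NormedSpace 𝕜 G] [NormedSpace 𝕜' G]
    [IsScalarTower 𝕜 𝕜' G] {c : 𝕜 → F →L[𝕜'] G} {c' : F →L[𝕜'] G} {d : 𝕜 → E →L[𝕜'] F}
    {d' : E →L[𝕜'] F} {x : 𝕜} (hc : HasDerivAt c c' x) (hd : HasDerivAt d d' x) :
    HasDerivAt (fun y => (c y).comp (d y)) (c'.comp (d x) + (c x).comp d') x := by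
  simpa [add_comm] using
    ((compL 𝕜' E F G).bilinearRestrictScalars 𝕜).hasDerivAt_of_bilinear (fun _ => hc) fun _ => hd

theorem HasDerivAt.of_eventually_isInverse {R : Type*} [NormedRing R] [HasSummableGeomSeries R]
    [NormedAlgebra 𝕜 R] {f g : 𝕜 → R} {f' : R} {x : 𝕜} (hf : HasDerivAt f f' x)
    (hfg : ∀ᶠ y in nhds x, f y * g y = 1 ∧ g y * f y = 1) :
    HasDerivAt g (-(g x * f' * g x)) x := by
  obtain ⟨hr, hl⟩ := hfg.self_of_nhds
  have hg : g =ᶠ[nhds x] fun y => Ring.inverse (f y) := by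
    filter_upwards [hfg] with y ⟨hr, hl⟩
    exact (Ring.inverse_unit ⟨f y, g y, hr, hl⟩).symm
  have h := (hasFDerivAt_ringInverse (𝕜 := 𝕜) ⟨f x, g x, hr, hl⟩).comp_hasDerivAt x hf
  simpa using h.congr_of_eventuallyEq hg

theorem ContDiffOn.hasDerivAt_pdx {M : Type*} [NormedAddCommGroup M] [NormedSpace ℝ M]
    {F : ℝ × ℝ → M} {s : Set (ℝ × ℝ)} {n : WithTop ℕ∞} {p : ℝ × ℝ} (hF : ContDiffOn ℝ n F s)
    (hn : n ≠ 0) (hs : s ∈ nhds p) :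
    HasDerivAt (fun x => F (x, p.2)) (pdx F p) p.1 :=
  (((hF.differentiableOn hn).differentiableAt hs).comp p.1
    (differentiableAt_id.prodMk (differentiableAt_const _))).hasDerivAt

theorem pdxM_c2m {d : ℕ} {T : ℝ × ℝ → Ed d →L[ℂ] Ed d} {T' : Ed d →L[ℂ] Ed d} {p : ℝ × ℝ}
    (hT : HasDerivAt (fun x => T (x, p.2)) T' p.1) :
    pdxM (fun q => c2m (T q)) p = c2m T' := by
  ext i j
  let entry : (Ed d →L[ℂ] Ed d) →L[ℂ] ℂ := LinearMap.toContinuousLinearMap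
    (Matrix.entryLinearMap ℂ ℂ i j ∘ₗ (Matrix.toEuclideanCLM (𝕜 := ℂ)).symm.toAlgEquiv.toLinearMap)
  change deriv (fun x => c2m (T (x, p.2)) i j) p.1 = c2m T' i j
  exact ((entry.restrictScalars ℝ).hasFDerivAt.comp_hasDerivAt p.1 hT).deriv

end Calculus

section MatrixCLM

variable {d : ℕ}

theorem c2m_add (S T : Ed d →L[ℂ] Ed d) : c2m (S + T) = c2m S + c2m T :=
  map_add _ S T

theorem c2m_sub (S T : Ed d →L[ℂ] Ed d) : c2m (S - T) = c2m S - c2m T :=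
  map_sub _ S T

theorem c2m_comp (S T : Ed d →L[ℂ] Ed d) : c2m (S ∘L T) = c2m S * c2m T :=
  map_mul _ S T

theorem c2m_m2c (σ : Matrix (Fin d) (Fin d) ℂ) : c2m (m2c σ) = σ :=
  (Matrix.toEuclideanCLM (𝕜 := ℂ)).symm_apply_apply σ

end MatrixCLM

namespace Vessel

variable {K : Type*} [NormedAddCommGroup K] [InnerProductSpace ℂ K] [CompleteSpace K] {d : ℕ}
  (V : Vessel K d) {p : ℝ × ℝ}

theorem H_zero (p : ℝ × ℝ) : V.H 0 p = c2m (V.C p ∘L V.Xi p ∘L V.B p) := by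
  rw [Vessel.H, pow_zero, one_def, id_comp]

theorem H_one (p : ℝ × ℝ) : V.H 1 p = c2m (V.C p ∘L V.Xi p ∘L V.A ∘L V.B p) := by
  rw [Vessel.H, pow_one]

theorem hasDerivAt_Xi (hp : p ∈ V.Ω) :
    HasDerivAt (fun x => V.Xi (x, p.2)) (-(V.Xi p ∘L pdx V.X p ∘L V.Xi p)) p.1 := by
  have hslice : ∀ᶠ x in nhds p.1, ((x, p.2) : ℝ × ℝ) ∈ V.Ω :=
    (continuous_id.prodMk continuous_const).continuousAt.preimage_mem_nhds (V.hΩ.mem_nhds hp)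
  exact (V.smoothX.hasDerivAt_pdx two_ne_zero (V.hΩ.mem_nhds hp)).of_eventually_isInverse
    (hslice.mono fun x hx => V.hXinv _ hx)

theorem Aζ_comp_Xi (hp : p ∈ V.Ω) :
    V.Aζ ∘L V.Xi p = -(V.Xi p ∘L V.A) - V.Xi p ∘L V.B p ∘L m2c V.σ1 ∘L V.C p ∘L V.Xi p := by
  obtain ⟨hXXi, hXiX⟩ := V.hXinv p hp
  have hX : V.X p ∘L V.Aζ = -(V.A ∘L V.X p) - V.B p ∘L m2c V.σ1 ∘L V.C p := by
    rw [← sub_eq_zero, ← V.eqLyap p hp]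
    abel
  calc V.Aζ ∘L V.Xi p = V.Xi p ∘L (V.X p ∘L V.Aζ) ∘L V.Xi p := by
        rw [← comp_assoc, ← comp_assoc, comp_assoc _ _ (V.Xi p), hXiX, one_def, id_comp]
    _ = _ := by
        simp only [hX, sub_comp, neg_comp, comp_assoc, hXXi, one_def, comp_id, comp_sub, comp_neg]

theorem pdxM_H_zero (hp : p ∈ V.Ω) :
    pdxM (V.H 0) p = c2m (pdx V.C p ∘L V.Xi p ∘L V.B p -
      V.C p ∘L (V.Xi p ∘L pdx V.X p ∘L V.Xi p) ∘L V.B p + V.C p ∘L V.Xi p ∘L pdx V.B p) := by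
  have hXiB := (V.hasDerivAt_Xi hp).clm_comp_of_isScalarTower
    (V.smoothB.hasDerivAt_pdx two_ne_zero (V.hΩ.mem_nhds hp))
  have hCXiB := (V.smoothC.hasDerivAt_pdx two_ne_zero (V.hΩ.mem_nhds hp)).clm_comp_of_isScalarTower
    hXiB
  rw [show V.H 0 = fun q => c2m (V.C q ∘L V.Xi q ∘L V.B q) from funext V.H_zero, pdxM_c2m hCXiB]
  simp only [comp_add, neg_comp, comp_neg, sub_eq_add_neg, add_assoc]

theorem moment_recurrence_zero (hp : p ∈ V.Ω) :
    V.σ1 * pdxM (V.H 0) p * V.σ1 =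
      V.γ * V.H 0 p * V.σ1 - V.σ1 * V.H 0 p * V.γ + V.σ2 * V.H 1 p * V.σ1 -
        V.σ1 * V.H 1 p * V.σ2 + V.σ2 * V.H 0 p * V.σ1 * V.H 0 p * V.σ1 -
        V.σ1 * V.H 0 p * V.σ2 * V.H 0 p * V.σ1 := by
  have hCx : m2c V.σ1 ∘L pdx V.C p = m2c V.γ ∘L V.C p - m2c V.σ2 ∘L V.C p ∘L V.Aζ := by
    rw [← sub_eq_zero, ← V.eqCx p hp]
    abel
  have hBx : pdx V.B p ∘L m2c V.σ1 = -(V.A ∘L V.B p ∘L m2c V.σ2) - V.B p ∘L m2c V.γ := by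
    rw [← sub_eq_zero, ← V.eqBx p hp]
    abel
  have hclm : m2c V.σ1 ∘L (pdx V.C p ∘L V.Xi p ∘L V.B p -
      V.C p ∘L (V.Xi p ∘L pdx V.X p ∘L V.Xi p) ∘L V.B p + V.C p ∘L V.Xi p ∘L pdx V.B p) ∘L
        m2c V.σ1 =
      m2c V.γ ∘L (V.C p ∘L V.Xi p ∘L V.B p) ∘L m2c V.σ1 -
        m2c V.σ1 ∘L (V.C p ∘L V.Xi p ∘L V.B p) ∘L m2c V.γ +
        m2c V.σ2 ∘L (V.C p ∘L V.Xi p ∘L V.A ∘L V.B p) ∘L m2c V.σ1 -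
        m2c V.σ1 ∘L (V.C p ∘L V.Xi p ∘L V.A ∘L V.B p) ∘L m2c V.σ2 +
        m2c V.σ2 ∘L (V.C p ∘L V.Xi p ∘L V.B p) ∘L m2c V.σ1 ∘L
          (V.C p ∘L V.Xi p ∘L V.B p) ∘L m2c V.σ1 -
        m2c V.σ1 ∘L (V.C p ∘L V.Xi p ∘L V.B p) ∘L m2c V.σ2 ∘L
          (V.C p ∘L V.Xi p ∘L V.B p) ∘L m2c V.σ1 := by
    simp only [comp_add, comp_sub, add_comp, sub_comp, comp_assoc]
    rw [← comp_assoc (m2c V.σ1) (pdx V.C p), hCx, hBx, V.eqXx p hp]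
    simp only [sub_comp, comp_sub, comp_neg, comp_assoc]
    rw [← comp_assoc V.Aζ (V.Xi p), V.Aζ_comp_Xi hp]
    simp only [sub_comp, neg_comp, comp_sub, comp_neg, comp_assoc]
    abel
  have hmat := congrArg c2m hclm
  simp only [c2m_comp, c2m_add, c2m_sub, c2m_m2c] at hmat
  rw [pdxM_H_zero V hp, V.H_zero, V.H_one]
  simp only [mul_assoc] at hmat ⊢
  exact hmat

end Vessel

theorem NLS_linkage_and_diagonal_general {K : Type*} [NormedAddCommGroup K]
    [InnerProductSpace ℂ K] [CompleteSpace K]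
    (V : Vessel K 2) (a γ11 γ12 γ21 : ℂ)
    (hσ1 : V.σ1 = 1) (hσ2 : V.σ2 = !![a, 0; 0, -a])
    (hγ : V.γ = !![γ11, γ12; γ21, -γ11]) :
    ∀ p ∈ V.Ω,
      V.γs p = !![γ11, γ12 + 2 * a * V.H 0 p 0 1;
                  γ21 - 2 * a * V.H 0 p 1 0, -γ11] ∧
      pdx (fun q => V.H 0 q 0 0) p - pdx (fun q => V.H 0 q 1 1) p =
        2 * (2 * a * V.H 0 p 0 1 * V.H 0 p 1 0 -
          γ21 * V.H 0 p 0 1 + γ12 * V.H 0 p 1 0) := by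
  intro p hp
  constructor
  · rw [V.eqLink p hp, ← V.H_zero, hσ1, hσ2, hγ, Matrix.eta_fin_two (V.H 0 p)]
    ext i j
    fin_cases i <;> fin_cases j <;> simp <;> ring
  · have hrec := V.moment_recurrence_zero hp
    rw [hσ1, hσ2, hγ] at hrec
    have h00 := congrFun (congrFun hrec 0) 0
    have h11 := congrFun (congrFun hrec 1) 1
    simp [pdxM, Matrix.mul_apply, Matrix.vecMul, dotProduct, Fin.sum_univ_two] at h00 h11
    linear_combination h00 - h11

/-- linkage condition and the diagonal moment relations for a vessel
with generalized NLS parameters. -/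
theorem NLS_linkage_and_diagonal {K : Type*} [NormedAddCommGroup K]
    [InnerProductSpace ℂ K] [CompleteSpace K]
    (V : Vessel K 2) (a γ11 γ12 γ21 : ℂ) (ha : a ≠ 0)
    (hσ1 : V.σ1 = 1) (hσ2 : V.σ2 = !![a, 0; 0, -a])
    (hγ : V.γ = !![γ11, γ12; γ21, -γ11]) :
    ∀ p ∈ V.Ω,
      V.γs p = !![γ11, γ12 + 2 * a * V.H 0 p 0 1;
                  γ21 - 2 * a * V.H 0 p 1 0, -γ11] ∧
      pdx (fun q => V.H 0 q 0 0) p - pdx (fun q => V.H 0 q 1 1) p =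
        2 * (2 * a * V.H 0 p 0 1 * V.H 0 p 1 0 -
          γ21 * V.H 0 p 0 1 + γ12 * V.H 0 p 1 0) :=
  NLS_linkage_and_diagonal_general V a γ11 γ12 γ21 hσ1 hσ2 hγ
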